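/- If all zeros of a nonconstant complex polynomial P lie in the closed unit disk |z| ≤ 1, then all zeros of P' also lie in the closed unit disk. -/

import Mathlib

open Polynomial

theorem Polynomial.mem_of_convex_of_eval_derivative_eq_zero {P : ℂ[X]} (hP : 0 < P.degree)
    {s : Set ℂ} (hs : Convex ℝ s) (hroots : ∀ z, P.eval z = 0 → z ∈ s) {z : ℂ}
    (hz : P.derivative.eval z = 0) : z ∈ s := by
  have hP' : P.derivative ≠ 0 :=
    derivative_eq_zero.not.mpr (natDegree_pos_iff_degree_pos.mpr hP).ne'
  have hrootSet : P.rootSet ℂ ⊆ s := fun w hw ↦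
    hroots w ((mem_rootSet'.mp hw).2)
  refine convexHull_min hrootSet hs (rootSet_derivative_subset_convexHull_rootSet hP ?_)
  exact mem_rootSet.mpr ⟨hP', by simpa using hz⟩

theorem stmt_7 (P : Polynomial ℂ) (hP : 0 < P.degree)
    (hz : ∀ z : ℂ, P.eval z = 0 → ‖z‖ ≤ 1) :
    ∀ z : ℂ, P.derivative.eval z = 0 → ‖z‖ ≤ 1 := by
  simp_rw [← mem_closedBall_zero_iff] at hz ⊢
  exact fun z ↦ mem_of_convex_of_eval_derivative_eq_zero hP (convex_closedBall 0 1) hz
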